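/- There exists a nonnegative real sequence {a_n}_{n≥1} which is a mean value bounded variation sequence (MVBVS) but is not a non-onesided bounded variation sequence (NBVS); i.e., for every constant C > 0 there is some n ≥ 1 with ∑_{k=n}^{2n} |a_k − a_{k+1}| > C·(a_n + a_{2n}). -/

import Mathlib

open Filter

/-- A nonnegative sequence (indexed from 1) is a mean value bounded variation sequence. -/
def IsMVBVS (a : ℕ → ℝ) : Prop :=
  ∃ lam : ℝ, 2 ≤ lam ∧ ∃ C : ℝ, 0 < C ∧ ∀ n : ℕ, 1 ≤ n →
    ∑ k ∈ Finset.Icc n (2 * n), |a k - a (k + 1)| ≤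
      (C / n) * ∑ k ∈ Finset.Icc ⌊(n : ℝ) / lam⌋₊ ⌊lam * n⌋₊, a k

/-!
Take `a k = 0` when `k` is a power of two and `a k = 1` otherwise. Since `1 - a` counts powers
of two, and an interval `[m, M]` contains at most `log₂ M + 1 - log₂ m` of them, the variation
over `[n, 2n]` is at most `4`, while `[n, 4n]` carries at least `n` ones; this gives the MVBV
inequality with `λ = C = 4`. But `a n + a (2n) = 0` at every power of two `n`, while the variation
there is positive, so no NBV constant exists.
-/

open Finset

namespace Nat

theorem card_filter_isPowerOfTwo_Icc_le (m M : ℕ) :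
    #{k ∈ Icc m M | k.isPowerOfTwo} ≤ log 2 M + 1 - log 2 m := by
  have hsub : {k ∈ Icc m M | k.isPowerOfTwo} ⊆ (Icc (log 2 m) (log 2 M)).image (2 ^ ·) := by
    rintro _ hk
    obtain ⟨hk, j, rfl⟩ := mem_filter.1 hk
    obtain ⟨hm, hM⟩ := mem_Icc.1 hk
    refine mem_image.2 ⟨j, mem_Icc.2 ⟨?_, le_log_of_pow_le one_lt_two hM⟩, rfl⟩
    simpa [log_pow one_lt_two] using log_mono_right (b := 2) hm
  calc #{k ∈ Icc m M | k.isPowerOfTwo} ≤ #((Icc (log 2 m) (log 2 M)).image (2 ^ ·)) :=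
        card_le_card hsub
    _ ≤ #(Icc (log 2 m) (log 2 M)) := Finset.card_image_le
    _ = log 2 M + 1 - log 2 m := card_Icc _ _

theorem card_filter_isPowerOfTwo_Icc_le_two {m M : ℕ} (hm : m ≠ 0) (hM : M ≤ 2 * m) :
    #{k ∈ Icc m M | k.isPowerOfTwo} ≤ 2 := by
  have hlog : log 2 M ≤ log 2 m + 1 := by
    simpa [mul_comm, log_mul_base one_lt_two hm] using log_mono_right (b := 2) hM
  have := card_filter_isPowerOfTwo_Icc_le m M
  omega

theorem card_filter_isPowerOfTwo_Icc_four_mul_le {n : ℕ} (hn : n ≠ 0) :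
    #{k ∈ Icc n (4 * n) | k.isPowerOfTwo} ≤ 3 := by
  have hlog : log 2 (4 * n) = log 2 n + 2 := by
    rw [show 4 * n = n * 2 * 2 by ring, log_mul_base one_lt_two (by positivity),
      log_mul_base one_lt_two hn]
  have := card_filter_isPowerOfTwo_Icc_le n (4 * n)
  omega

theorem not_isPowerOfTwo_two_pow_add_one {j : ℕ} (hj : j ≠ 0) :
    ¬ (2 ^ j + 1).isPowerOfTwo := by
  rintro ⟨i, hi⟩
  have hj2 : 2 ∣ 2 ^ j := dvd_pow_self 2 hj
  rcases i with _ | i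
  · have : 0 < 2 ^ j := by positivity
    omega
  · have : 2 ∣ 2 ^ (i + 1) := dvd_pow_self 2 i.succ_ne_zero
    omega

end Nat

def nonPowTwoIndicator (k : ℕ) : ℝ := if k.isPowerOfTwo then 0 else 1

namespace nonPowTwoIndicator

local notation "a" => nonPowTwoIndicator

theorem nonneg (k : ℕ) : 0 ≤ a k := by unfold nonPowTwoIndicator; split <;> norm_num

theorem le_one (k : ℕ) : a k ≤ 1 := by unfold nonPowTwoIndicator; split <;> norm_num

theorem two_pow (j : ℕ) : a (2 ^ j) = 0 := if_pos ⟨j, rfl⟩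

theorem sum_one_sub (s : Finset ℕ) : ∑ k ∈ s, (1 - a k) = #{k ∈ s | k.isPowerOfTwo} := by
  rw [← sum_boole]
  refine sum_congr rfl fun k _ => ?_
  unfold nonPowTwoIndicator
  split <;> norm_num

theorem variation_le_four {n : ℕ} (hn : n ≠ 0) :
    ∑ k ∈ Icc n (2 * n), |a k - a (k + 1)| ≤ 4 := by
  have hshift :
      ∑ k ∈ Icc n (2 * n), (1 - a (k + 1)) = ∑ k ∈ Icc (n + 1) (2 * n + 1), (1 - a k) := by
    rw [← map_add_right_Icc, sum_map]
    rfl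
  have h₁ := Nat.card_filter_isPowerOfTwo_Icc_le_two hn le_rfl
  have h₂ := Nat.card_filter_isPowerOfTwo_Icc_le_two n.add_one_ne_zero
    (by omega : 2 * n + 1 ≤ 2 * (n + 1))
  calc ∑ k ∈ Icc n (2 * n), |a k - a (k + 1)|
      ≤ ∑ k ∈ Icc n (2 * n), ((1 - a k) + (1 - a (k + 1))) :=
        sum_le_sum fun k _ =>
          abs_sub_le_iff.2 ⟨by linarith [le_one k], by linarith [le_one (k + 1)]⟩
    _ = #{k ∈ Icc n (2 * n) | k.isPowerOfTwo} +
          #{k ∈ Icc (n + 1) (2 * n + 1) | k.isPowerOfTwo} := by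
        rw [sum_add_distrib, hshift, sum_one_sub, sum_one_sub]
    _ ≤ 4 := by exact_mod_cast (by omega : _ + _ ≤ 4)

theorem le_sum_Icc_four_mul {n : ℕ} (hn : n ≠ 0) :
    (n : ℝ) ≤ ∑ k ∈ Icc n (4 * n), a k := by
  have hcount := Nat.card_filter_isPowerOfTwo_Icc_four_mul_le hn
  have hsum : ∑ k ∈ Icc n (4 * n), a k =
      #(Icc n (4 * n)) - #{k ∈ Icc n (4 * n) | k.isPowerOfTwo} := by
    rw [← sum_one_sub, sum_sub_distrib, sum_const, nsmul_one, sub_sub_cancel]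
  rw [hsum, Nat.card_Icc, le_sub_iff_add_le, ← Nat.cast_add]
  exact_mod_cast (by omega : n + #{k ∈ Icc n (4 * n) | k.isPowerOfTwo} ≤ 4 * n + 1 - n)

theorem isMVBVS : IsMVBVS a := by
  refine ⟨4, by norm_num, 4, by norm_num, fun n hn => ?_⟩
  have hn₀ : n ≠ 0 := by omega
  have hfloor : Icc n (4 * n) ⊆ Icc ⌊(n : ℝ) / 4⌋₊ ⌊4 * (n : ℝ)⌋₊ := by
    rw [show (4 : ℝ) * n = ((4 * n : ℕ) : ℝ) by push_cast; ring, Nat.floor_natCast]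
    refine Icc_subset_Icc_left ((Nat.floor_le_floor ?_).trans (Nat.floor_natCast n).le)
    exact div_le_self n.cast_nonneg (by norm_num)
  have hpos : (0 : ℝ) < n := by exact_mod_cast Nat.pos_of_ne_zero hn₀
  calc ∑ k ∈ Icc n (2 * n), |a k - a (k + 1)| ≤ 4 := variation_le_four hn₀
    _ = 4 / n * n := by field_simp
    _ ≤ 4 / n * ∑ k ∈ Icc n (4 * n), a k := by gcongr; exact le_sum_Icc_four_mul hn₀
    _ ≤ 4 / n * ∑ k ∈ Icc ⌊(n : ℝ) / 4⌋₊ ⌊4 * (n : ℝ)⌋₊, a k :=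
        mul_le_mul_of_nonneg_left (sum_le_sum_of_subset_of_nonneg hfloor fun k _ _ => nonneg k)
          (by positivity)

theorem one_le_variation_two_pow (j : ℕ) :
    1 ≤ ∑ k ∈ Icc (2 ^ j) (2 * 2 ^ j), |a k - a (k + 1)| := by
  have hterm : |a (2 * 2 ^ j) - a (2 * 2 ^ j + 1)| = 1 := by
    rw [← pow_succ', two_pow, nonPowTwoIndicator,
      if_neg (Nat.not_isPowerOfTwo_two_pow_add_one j.succ_ne_zero)]
    norm_num
  rw [← hterm]
  exact single_le_sum (f := fun k => |a k - a (k + 1)|) (fun k _ => abs_nonneg _)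
    (mem_Icc.2 ⟨by omega, le_rfl⟩)

end nonPowTwoIndicator

/-- There is a nonnegative MVBV sequence which is not a non-onesided bounded
variation sequence: for every `C > 0` the NBV inequality fails for some `n ≥ 1`. -/
theorem stmt4 :
    ∃ a : ℕ → ℝ,
      (∀ n : ℕ, 1 ≤ n → 0 ≤ a n) ∧
      IsMVBVS a ∧
      ∀ C : ℝ, 0 < C → ∃ n : ℕ, 1 ≤ n ∧
        C * (a n + a (2 * n)) < ∑ k ∈ Finset.Icc n (2 * n), |a k - a (k + 1)| := by
  refine ⟨nonPowTwoIndicator, fun n _ => nonPowTwoIndicator.nonneg n, nonPowTwoIndicator.isMVBVS,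
    fun C _ => ⟨2 ^ 0, le_rfl, ?_⟩⟩
  rw [← pow_succ', nonPowTwoIndicator.two_pow, nonPowTwoIndicator.two_pow, add_zero, mul_zero,
    pow_succ']
  exact one_pos.trans_le (nonPowTwoIndicator.one_le_variation_two_pow 0)
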